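/- arXiv:2306.17804 — 2 statements merged into one kernel-verified Lean document; each statement's English description precedes it below -/
import Mathlib

section
/- Let G = (V,E) be a finite simple graph with n vertices and m edges whose degeneracy is d. Then the transformed graph G_VCC has exactly m vertices, at most d·n vertices, and at most (3/2)·d(d−1)·(n + m) edges. -/
open SimpleGraph

/-- The (partial) transformed graph `G'_VCC` of a graph `G` with respect to a set `E'` of
edges of `G`: one vertex per edge of `E'`, two distinct vertices adjacent iff the union of
the endpoints of their corresponding edges is a clique in `G`. -/
def SimpleGraph.transGraph {V : Type*} (G : SimpleGraph V) (E' : Set (Sym2 V)) :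
    SimpleGraph {e : Sym2 V // e ∈ E'} where
  Adj a b := a ≠ b ∧ G.IsClique ({x | x ∈ a.1} ∪ {x | x ∈ b.1})
  symm := by
    constructor
    intro a b h
    exact ⟨h.1.symm, by rw [Set.union_comm]; exact h.2⟩
  loopless := by
    constructor
    intro a h
    exact h.1 rfl

/-- The minimum cardinality of a vertex clique cover of `G`. -/
noncomputable def SimpleGraph.vccNumber {W : Type*} (G : SimpleGraph W) : ℕ :=
  sInf {n | ∃ 𝒞 : Set (Set W), 𝒞.Finite ∧ 𝒞.ncard = n ∧
    (∀ C ∈ 𝒞, G.IsClique C) ∧ ∀ w : W, ∃ C ∈ 𝒞, w ∈ C}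

/-- The minimum cardinality of a set of cliques of `G` covering every edge of `E'`. -/
noncomputable def SimpleGraph.eccNumberOn {W : Type*} (G : SimpleGraph W)
    (E' : Set (Sym2 W)) : ℕ :=
  sInf {n | ∃ 𝒞 : Set (Set W), 𝒞.Finite ∧ 𝒞.ncard = n ∧
    (∀ C ∈ 𝒞, G.IsClique C) ∧ ∀ e ∈ E', ∃ C ∈ 𝒞, ∀ x ∈ e, x ∈ C}

/-- The minimum cardinality of an edge clique cover of `G`. -/
noncomputable def SimpleGraph.eccNumber {W : Type*} (G : SimpleGraph W) : ℕ :=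
  G.eccNumberOn G.edgeSet

/-- `G` is `d`-degenerate: every nonempty (induced) subgraph has a vertex of degree at most
`d`. -/
def SimpleGraph.Degenerate {W : Type*} (G : SimpleGraph W) (d : ℕ) : Prop :=
  ∀ S : Set W, S.Nonempty → ∃ v ∈ S, {u ∈ S | G.Adj v u}.ncard ≤ d

/-- The degeneracy of `G`: the smallest `d` such that `G` is `d`-degenerate. -/
noncomputable def SimpleGraph.degeneracy {W : Type*} (G : SimpleGraph W) : ℕ :=
  sInf {d | G.Degenerate d}

/-!
Order the vertices so that every vertex has at most `d` later neighbours (peel off a vertex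
of minimum degree, repeatedly). An edge `{v, u}` with `v < u` is charged to `v`, giving `m ≤ d n`.
For an edge `{e, f}` of `G_VCC`, let `w` be the smallest vertex of `e ∪ f`, say `w ∈ e`; the
other vertices are later neighbours of `w`. If `w ∈ f` as well, `{e, f}` is determined by `w`
and the pair `e ∪ f \ {w}`; otherwise it is determined by the edge `e` and the pair `f`. This
gives at most `C(d, 2)` edges of `G_VCC` per vertex and per edge of `G`.
-/

open Finset

namespace SimpleGraph

variable {V : Type*} (G : SimpleGraph V)

theorem degenerate_degeneracy [Finite V] : G.Degenerate G.degeneracy :=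
  Nat.sInf_mem (s := {d | G.Degenerate d})
    ⟨Nat.card V, fun _ ⟨v, hv⟩ => ⟨v, hv, Set.ncard_le_card _⟩⟩

theorem Degenerate.exists_rank [Fintype V] {d : ℕ} (hG : G.Degenerate d) :
    ∃ r : V → ℕ, Function.Injective r ∧
      ∀ v, {u | G.Adj v u ∧ r v < r u}.ncard ≤ d := by
  classical
  suffices h : ∀ s : Finset V, ∃ r : V → ℕ, Set.InjOn r s ∧
      ∀ v ∈ s, {u | u ∈ s ∧ G.Adj v u ∧ r v < r u}.ncard ≤ d by
    obtain ⟨r, hr, hd⟩ := h univ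
    exact ⟨r, fun a b => hr (by simp) (by simp), fun v => by simpa using hd v (mem_univ v)⟩
  intro s
  induction s using Finset.strongInduction with
  | _ s ih =>
    rcases s.eq_empty_or_nonempty with rfl | hs
    · exact ⟨fun _ => 0, by simp, by simp⟩
    obtain ⟨v, hv, hvd⟩ := hG s (mod_cast hs)
    obtain ⟨r, hr, hd⟩ := ih (s.erase v) (erase_ssubset hv)
    -- `v` gets the smallest rank, so all its neighbours in `s` come later.
    refine ⟨fun u => if u = v then 0 else r u + 1, ?_, fun w hw => ?_⟩
    · intro a ha b hb hab
      by_cases hav : a = v <;> by_cases hbv : b = v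
      · exact hav.trans hbv.symm
      all_goals simp only [hav, hbv, if_true, if_false] at hab
      · omega
      · omega
      · exact hr (mem_erase.2 ⟨hav, ha⟩) (mem_erase.2 ⟨hbv, hb⟩) (by omega)
    by_cases hwv : w = v
    · subst hwv
      refine (Set.ncard_le_ncard ?_).trans hvd
      rintro u ⟨hus, hadj, -⟩
      exact ⟨hus, hadj⟩
    refine (Set.ncard_le_ncard ?_).trans (hd w (mem_erase.2 ⟨hwv, hw⟩))
    rintro u ⟨hus, hadj, hlt⟩
    have huv : u ≠ v := by rintro rfl; simp [hwv] at hlt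
    simp only [hwv, huv, if_false, add_lt_add_iff_right] at hlt
    exact ⟨mem_erase.2 ⟨huv, hus⟩, hadj, hlt⟩

theorem exists_lt_of_mem_edgeSet [LinearOrder V] {e : Sym2 V} (he : e ∈ G.edgeSet) :
    ∃ x y, x < y ∧ e = s(x, y) := by
  induction e with
  | _ a b =>
    rcases lt_or_gt_of_ne (G.mem_edgeSet.1 he).ne with h | h
    · exact ⟨a, b, h, rfl⟩
    · exact ⟨b, a, h, Sym2.eq_swap⟩

section ForwardNeighbors

variable [Fintype V] [LinearOrder V] [DecidableRel G.Adj]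

def forwardNeighbors (v : V) : Finset V := {u | G.Adj v u ∧ v < u}

def forwardPairs (v : V) : Finset (V × V) :=
  {x ∈ G.forwardNeighbors v ×ˢ G.forwardNeighbors v | x.1 < x.2}

theorem card_forwardPairs_le {d : ℕ} (hd : ∀ v, #(G.forwardNeighbors v) ≤ d) (v : V) :
    #(G.forwardPairs v) ≤ d.choose 2 := by
  rw [forwardPairs, card_product_filter_lt]
  exact Nat.choose_le_choose 2 (hd v)

theorem card_edgeFinset_le {d : ℕ} (hd : ∀ v, #(G.forwardNeighbors v) ≤ d) :
    #G.edgeFinset ≤ d * Fintype.card V := by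
  have hcover : G.edgeFinset ⊆
      univ.biUnion fun v => (G.forwardNeighbors v).image fun u => s(v, u) := by
    intro e he
    obtain ⟨x, y, hxy, rfl⟩ := G.exists_lt_of_mem_edgeSet (G.mem_edgeFinset.1 he)
    simp only [mem_biUnion, mem_image, forwardNeighbors, mem_filter, mem_univ, true_and]
    exact ⟨x, y, ⟨G.mem_edgeFinset.1 he, hxy⟩, rfl⟩
  calc #G.edgeFinset
      ≤ ∑ v, #((G.forwardNeighbors v).image fun u => s(v, u)) :=
        (card_le_card hcover).trans card_biUnion_le
    _ ≤ ∑ _v : V, d := sum_le_sum fun v _ => card_image_le.trans (hd v)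
    _ = d * Fintype.card V := by simp [mul_comm]

def vccEdgesAt (v : V) : Finset (Sym2 (Sym2 V)) :=
  (G.forwardPairs v).image fun x => s(s(v, x.1), s(v, x.2))

def vccEdgesWith (e : Sym2 V) : Finset (Sym2 (Sym2 V)) :=
  (G.forwardPairs e.inf).image fun x => s(e, s(x.1, x.2))

def vccEdgeCandidates : Finset (Sym2 (Sym2 V)) :=
  univ.biUnion G.vccEdgesAt ∪ G.edgeFinset.biUnion G.vccEdgesWith

theorem card_vccEdgeCandidates_le {d : ℕ} (hd : ∀ v, #(G.forwardNeighbors v) ≤ d) :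
    #G.vccEdgeCandidates ≤ d.choose 2 * (Fintype.card V + #G.edgeFinset) := by
  calc #G.vccEdgeCandidates
      ≤ Fintype.card V * d.choose 2 + #G.edgeFinset * d.choose 2 :=
        (card_union_le _ _).trans (add_le_add
          (card_biUnion_le_card_mul _ _ _ fun v _ =>
            card_image_le.trans (G.card_forwardPairs_le hd v))
          (card_biUnion_le_card_mul _ _ _ fun e _ =>
            card_image_le.trans (G.card_forwardPairs_le hd e.inf)))
    _ = d.choose 2 * (Fintype.card V + #G.edgeFinset) := by ring

theorem mem_vccEdgeCandidates_of_le {x₁ x₂ y₁ y₂ : V} (hx : x₁ < x₂) (hy : y₁ < y₂)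
    (hle : x₁ ≤ y₁) (hne : s(x₁, x₂) ≠ s(y₁, y₂)) (hc : G.IsClique {x₁, x₂, y₁, y₂}) :
    s(s(x₁, x₂), s(y₁, y₂)) ∈ G.vccEdgeCandidates := by
  have hadj : ∀ {a b : V}, a ∈ ({x₁, x₂, y₁, y₂} : Set V) → b ∈ ({x₁, x₂, y₁, y₂} : Set V) →
      a < b → G.Adj a b := fun ha hb hab => hc ha hb hab.ne
  have hfwd : ∀ {b : V}, b ∈ ({x₁, x₂, y₁, y₂} : Set V) → x₁ < b →
      b ∈ G.forwardNeighbors x₁ := fun hb hlt => by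
    simpa [forwardNeighbors, hlt] using hadj (by simp) hb hlt
  rcases hle.eq_or_lt with rfl | hlt
  · have hne₂ : x₂ ≠ y₂ := by rintro rfl; exact hne rfl
    refine mem_union_left _ (mem_biUnion.2 ⟨x₁, mem_univ _, ?_⟩)
    rcases lt_or_gt_of_ne hne₂ with h | h
    · exact mem_image.2 ⟨(x₂, y₂), by simp [forwardPairs, hfwd, hx, hy, h], rfl⟩
    · exact mem_image.2 ⟨(y₂, x₂), by simp [forwardPairs, hfwd, hx, hy, h], Sym2.eq_swap⟩
  · refine mem_union_right _ (mem_biUnion.2 ⟨s(x₁, x₂), ?_, mem_image.2 ⟨(y₁, y₂), ?_, rfl⟩⟩)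
    · exact G.mem_edgeFinset.2 (hadj (by simp) (by simp) hx)
    · simp [forwardPairs, Sym2.inf_mk, inf_eq_left.2 hx.le, hfwd, hlt, hlt.trans hy, hy]

theorem map_val_mem_vccEdgeCandidates {ε : Sym2 G.edgeSet}
    (hε : ε ∈ (G.transGraph G.edgeSet).edgeSet) :
    ε.map Subtype.val ∈ G.vccEdgeCandidates := by
  induction ε with
  | _ a b =>
    obtain ⟨hab, hc⟩ := hε
    obtain ⟨x₁, x₂, hx, ha⟩ := G.exists_lt_of_mem_edgeSet a.2
    obtain ⟨y₁, y₂, hy, hb⟩ := G.exists_lt_of_mem_edgeSet b.2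
    have hne : a.1 ≠ b.1 := fun h => hab (Subtype.ext h)
    have hset : {x | x ∈ a.1} ∪ {x | x ∈ b.1} = ({x₁, x₂, y₁, y₂} : Set V) := by
      ext; simp [ha, hb, or_assoc]
    rw [hset] at hc
    rw [Sym2.map_mk, ha, hb] at *
    rcases le_total x₁ y₁ with h | h
    · exact G.mem_vccEdgeCandidates_of_le hx hy h hne hc
    · rw [Sym2.eq_swap]
      refine G.mem_vccEdgeCandidates_of_le hy hx h hne.symm (hc.subset ?_)
      intro; simp only [Set.mem_insert_iff, Set.mem_singleton_iff]; tauto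

theorem ncard_transGraph_edgeSet_le {d : ℕ} (hd : ∀ v, #(G.forwardNeighbors v) ≤ d) :
    (G.transGraph G.edgeSet).edgeSet.ncard ≤ d.choose 2 * (Fintype.card V + #G.edgeFinset) :=
  calc (G.transGraph G.edgeSet).edgeSet.ncard
      = (Sym2.map Subtype.val '' (G.transGraph G.edgeSet).edgeSet).ncard :=
        (Set.ncard_image_of_injective _ (Sym2.map.injective Subtype.val_injective)).symm
    _ ≤ (G.vccEdgeCandidates : Set (Sym2 (Sym2 V))).ncard :=
        Set.ncard_le_ncard (Set.image_subset_iff.2 fun _ => G.map_val_mem_vccEdgeCandidates)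
    _ ≤ d.choose 2 * (Fintype.card V + #G.edgeFinset) :=
        (Set.ncard_coe_finset _).trans_le (G.card_vccEdgeCandidates_le hd)

end ForwardNeighbors

end SimpleGraph

/-- If `G` has `n` vertices, `m` edges, and degeneracy `d`, then the
transformed graph `G_VCC` has exactly `m` vertices, at most `d * n` vertices, and at
most `(3/2) * d * (d-1) * (n + m)` edges. -/
theorem stmt_7 {V : Type*} [Fintype V] (G : SimpleGraph V) (n m d : ℕ)
    (hn : n = Fintype.card V) (hm : m = G.edgeSet.ncard)
    (hd : G.degeneracy = d) :
    Nat.card {e : Sym2 V // e ∈ G.edgeSet} = m ∧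
    Nat.card {e : Sym2 V // e ∈ G.edgeSet} ≤ d * n ∧
    (G.transGraph G.edgeSet).edgeSet.ncard ≤ 3 * (d * (d - 1) / 2) * (n + m) := by
  classical
  obtain ⟨r, hr, hrank⟩ := (hd ▸ G.degenerate_degeneracy).exists_rank
  let : LinearOrder V := LinearOrder.lift' r hr
  have hfwd : ∀ v, #(G.forwardNeighbors v) ≤ d := fun v => by
    rw [← Set.ncard_coe_finset, forwardNeighbors, coe_filter]
    simp only [mem_univ, true_and]
    exact hrank v
  have hm' : m = #G.edgeFinset := by rw [hm, ← coe_edgeFinset, Set.ncard_coe_finset]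
  have hcard : Nat.card {e : Sym2 V // e ∈ G.edgeSet} = m := by rw [Nat.card_coe_set_eq, hm]
  refine ⟨hcard, hcard ▸ hm' ▸ hn ▸ G.card_edgeFinset_le hfwd, ?_⟩
  calc (G.transGraph G.edgeSet).edgeSet.ncard ≤ d.choose 2 * (n + m) :=
        hn ▸ hm' ▸ G.ncard_transGraph_edgeSet_le hfwd
    _ ≤ 3 * (d * (d - 1) / 2) * (n + m) := by
        rw [Nat.choose_two_right]
        gcongr
        omega
end

section
/- Let G = (V,E) be a finite simple graph, let E' ⊆ E, and let G'_VCC be the partial transformed graph of G with respect to E'. If C' is a vertex clique cover of G'_VCC, then C = { ⋃_{v_{xy} ∈ C''} {x,y} : C'' ∈ C' } is a set of cliques of G of cardinality at most |C'| such that every edge of E' is contained in some clique of C. -/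
open SimpleGraph

/-! Any two vertices of `⋃_{v_xy ∈ C''} {x,y}` lie in `{x,y} ∪ {w,z}` for two edges `v_xy, v_wz`
of `C''`; this set is a clique of `G`, by adjacency in `G'_VCC` if the edges differ and because
`{x,y}` is an edge of `G` if they coincide. -/

namespace SimpleGraph

variable {V : Type*} {G : SimpleGraph V}

theorem isClique_biUnion_of_isClique_union {ι : Type*} {s : Set ι} {f : ι → Set V}
    (h : ∀ i ∈ s, ∀ j ∈ s, G.IsClique (f i ∪ f j)) : G.IsClique (⋃ i ∈ s, f i) := by
  intro x hx y hy hxy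
  simp only [Set.mem_iUnion] at hx hy
  obtain ⟨i, hi, hxi⟩ := hx
  obtain ⟨j, hj, hyj⟩ := hy
  exact h i hi j hj (Or.inl hxi) (Or.inr hyj) hxy

theorem isClique_of_mem_edgeSet {e : Sym2 V} (he : e ∈ G.edgeSet) : G.IsClique {x | x ∈ e} := by
  induction e with
  | h a b =>
    simpa only [Sym2.mem_iff, Set.ofPred_or, Set.ofPred_eq_eq_singleton, Set.singleton_union]
      using isClique_pair.mpr fun _ ↦ he

theorem IsClique.isClique_biUnion_transGraph {E' : Set (Sym2 V)} (hE' : E' ⊆ G.edgeSet)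
    {C'' : Set {e : Sym2 V // e ∈ E'}} (hC'' : (G.transGraph E').IsClique C'') :
    G.IsClique (⋃ e ∈ C'', {x | x ∈ e.1}) := by
  refine isClique_biUnion_of_isClique_union fun e he f hf ↦ ?_
  obtain rfl | hef := eq_or_ne e f
  · simpa only [Set.union_self] using isClique_of_mem_edgeSet (hE' e.2)
  · exact (hC'' he hf hef).2

end SimpleGraph

/-- If `𝒞'` is a vertex clique cover of the partial transformed graph
`G'_VCC`, then `𝒞 = { ⋃_{v_xy ∈ C''} {x,y} : C'' ∈ 𝒞' }` is a set of cliques of `G`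
of cardinality at most `|𝒞'|` such that every edge of `E'` is contained in some clique
of `𝒞`. -/
theorem stmt_9 {V : Type*} [Fintype V] (G : SimpleGraph V) (E' : Set (Sym2 V))
    (hE' : E' ⊆ G.edgeSet)
    (𝒞' : Set (Set {e : Sym2 V // e ∈ E'}))
    (hclique : ∀ C'' ∈ 𝒞', (G.transGraph E').IsClique C'')
    (hcover : ∀ e : {e : Sym2 V // e ∈ E'}, ∃ C'' ∈ 𝒞', e ∈ C'')
    (𝒞 : Set (Set V))
    (h𝒞 : 𝒞 = (fun C'' : Set {e : Sym2 V // e ∈ E'} => ⋃ e ∈ C'', {x | x ∈ e.1}) '' 𝒞') :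
    𝒞.ncard ≤ 𝒞'.ncard ∧
    (∀ C ∈ 𝒞, G.IsClique C) ∧
    (∀ e ∈ E', ∃ C ∈ 𝒞, ∀ x ∈ e, x ∈ C) := by
  subst h𝒞
  refine ⟨Set.ncard_image_le 𝒞'.toFinite, ?_, fun e he ↦ ?_⟩
  · rintro _ ⟨C'', hC'', rfl⟩
    exact (hclique C'' hC'').isClique_biUnion_transGraph hE'
  · obtain ⟨C'', hC'', heC''⟩ := hcover ⟨e, he⟩
    exact ⟨_, ⟨C'', hC'', rfl⟩, fun x hx ↦ Set.mem_biUnion heC'' hx⟩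
end
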